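/- Let φ be an antisymmetric bilinear form on (V,h), dim V = n, and define A_{ijkl} = 2φ_{ij}h_{kl} + φ_{ik}h_{jl} − φ_{jk}h_{il} − φ_{il}h_{jk} + φ_{jl}h_{ik}. Then A is a Weyl tensor: A is a generalized curvature tensor and satisfies A_{ijkl} + A_{ijlk} = (2/n)(Ric(A)_{ji} − Ric(A)_{ij})h_{kl}. -/

import Mathlib

/-! Contracting `A` with `h⁻¹` gives `Ric(A) = -n φ`: the full contraction `h^{il}φ_{il}` vanishes because `h⁻¹` is
symmetric and `φ` antisymmetric, and the remaining four terms contribute `2φ_{kj} + φ_{jk} - nφ_{jk} + φ_{jk}`.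
Symmetrizing `A` in its last two indices leaves only `4φ_{ij}h_{kl}`, which is therefore
`(2/n)(Ric_{ji} - Ric_{ij})h_{kl}`. The curvature-tensor identities are direct algebra. -/

open Matrix Finset

variable {ι R : Type*}

section Tensor

variable [CommRing R] {h φ : Matrix ι ι R}

def skewWeylTensor (h φ : Matrix ι ι R) (i j k l : ι) : R :=
  2 * φ i j * h k l + φ i k * h j l - φ j k * h i l - φ i l * h j k + φ j l * h i k

theorem skewWeylTensor_swap (hφ : ∀ i j, φ i j = -φ j i) (i j k l : ι) :
    skewWeylTensor h φ i j k l = -skewWeylTensor h φ j i k l := by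
  simp only [skewWeylTensor]
  linear_combination 2 * h k l * hφ i j

theorem skewWeylTensor_bianchi (hh : h.IsSymm) (hφ : ∀ i j, φ i j = -φ j i) (i j k l : ι) :
    skewWeylTensor h φ i j k l + skewWeylTensor h φ j k i l + skewWeylTensor h φ k i j l = 0 := by
  simp only [skewWeylTensor, hφ j i, hφ k i, hφ k j, hh.apply i k, hh.apply i j, hh.apply j k]
  ring

theorem skewWeylTensor_add_swap (hh : h.IsSymm) (i j k l : ι) :
    skewWeylTensor h φ i j k l + skewWeylTensor h φ i j l k = 4 * φ i j * h k l := by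
  simp only [skewWeylTensor, hh.apply k l]
  ring

end Tensor

variable [Fintype ι] [CommRing R] {g h φ : Matrix ι ι R}

theorem Matrix.IsSymm.of_mul_eq_one [DecidableEq ι] (hh : h.IsSymm) (hhg : h * g = 1) : g.IsSymm := by
  have hgh : gᵀ * h = 1 := by
    rw [← hh.eq, ← transpose_mul, hhg, transpose_one]
  exact left_inv_eq_right_inv hgh hhg

theorem sum_sum_mul_eq_zero_of_isSymm [NoZeroDivisors R] [CharZero R] (hg : g.IsSymm)
    (hφ : ∀ i j, φ i j = -φ j i) : ∑ i, ∑ l, g i l * φ i l = 0 := by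
  refine self_eq_neg.1 ?_
  calc ∑ i, ∑ l, g i l * φ i l = ∑ l, ∑ i, g i l * φ i l := sum_comm
    _ = ∑ l, ∑ i, -(g l i * φ l i) :=
      sum_congr rfl fun l _ => sum_congr rfl fun i _ => by rw [hφ i l, hg.apply l i, mul_neg]
    _ = -∑ i, ∑ l, g i l * φ i l := by simp only [sum_neg_distrib]

theorem sum_sum_mul_skewWeylTensor (hh : h.IsSymm) (j k : ι) :
    ∑ i, ∑ l, g i l * skewWeylTensor h φ i j k l =
      2 * ∑ i, φ i j * (g * h) i k + ∑ i, φ i k * (g * h) i j - φ j k * trace (g * h)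
        - h j k * ∑ i, ∑ l, g i l * φ i l + ∑ l, φ j l * (h * g) k l := by
  simp only [skewWeylTensor, mul_apply, trace, Matrix.diag, mul_sum]
  rw [sum_comm (f := fun l i => φ j l * (h k i * g i l))]
  simp only [← sum_add_distrib, ← sum_sub_distrib]
  refine sum_congr rfl fun i _ => sum_congr rfl fun l _ => ?_
  rw [hh.apply i k, hh.apply i l, hh.apply l k, hh.apply l j]
  ring

theorem sum_sum_mul_skewWeylTensor_of_mul_eq_one [DecidableEq ι] [NoZeroDivisors R] [CharZero R]
    (hh : h.IsSymm) (hgh : g * h = 1) (hhg : h * g = 1) (hφ : ∀ i j, φ i j = -φ j i) (j k : ι) :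
    ∑ i, ∑ l, g i l * skewWeylTensor h φ i j k l = -(Fintype.card ι : R) * φ j k := by
  rw [sum_sum_mul_skewWeylTensor hh, hgh, hhg, trace_one,
    sum_sum_mul_eq_zero_of_isSymm (hh.of_mul_eq_one hhg) hφ]
  simp only [one_apply, mul_ite, mul_one, mul_zero, sum_ite_eq', sum_ite_eq, mem_univ, if_true]
  rw [hφ k j]
  ring

theorem sigma4_minus_sigma5_is_weyl_general
    {n : ℕ}
    (h hinv : Matrix (Fin n) (Fin n) ℝ)
    (hsymm : ∀ i j, h i j = h j i)
    (hinv1 : h * hinv = 1) (hinv2 : hinv * h = 1)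
    (φ : Matrix (Fin n) (Fin n) ℝ) (hφ : ∀ i j, φ i j = - φ j i)
    (A : Fin n → Fin n → Fin n → Fin n → ℝ)
    (hA : ∀ i j k l, A i j k l =
      2 * φ i j * h k l + φ i k * h j l - φ j k * h i l
        - φ i l * h j k + φ j l * h i k)
    (Ric : Fin n → Fin n → ℝ)
    (hRic : ∀ j k, Ric j k = ∑ i, ∑ l, hinv i l * A i j k l) :
    (∀ i j k l, A i j k l = - A j i k l) ∧
    (∀ i j k l, A i j k l + A j k i l + A k i j l = 0) ∧
    (∀ i j k l, A i j k l + A i j l k =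
      (2 / (n : ℝ)) * (Ric j i - Ric i j) * h k l) := by
  have hh : h.IsSymm := IsSymm.ext fun i j => hsymm j i
  obtain rfl : A = skewWeylTensor h φ := by
    funext i j k l
    exact hA i j k l
  have hRic_eq (j k : Fin n) : Ric j k = -n * φ j k := by
    rw [hRic, sum_sum_mul_skewWeylTensor_of_mul_eq_one hh hinv2 hinv1 hφ, Fintype.card_fin]
  refine ⟨skewWeylTensor_swap hφ, skewWeylTensor_bianchi hh hφ, fun i j k l => ?_⟩
  have hn : (n : ℝ) ≠ 0 := Nat.cast_ne_zero.2 i.pos.ne'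
  rw [skewWeylTensor_add_swap hh, hRic_eq, hRic_eq, hφ j i]
  field_simp
  ring

/-- For an antisymmetric bilinear form `φ` on `(V,h)`, the tensor
`A_{ijkl} = 2φ_{ij}h_{kl} + φ_{ik}h_{jl} − φ_{jk}h_{il} − φ_{il}h_{jk} + φ_{jl}h_{ik}`
is a Weyl tensor: a generalized curvature tensor satisfying
`A_{ijkl} + A_{ijlk} = (2/n)(Ric(A)_{ji} − Ric(A)_{ij})h_{kl}`. -/
theorem sigma4_minus_sigma5_is_weyl
    {n : ℕ} (hn : 3 ≤ n)
    (h hinv : Matrix (Fin n) (Fin n) ℝ)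
    (hsymm : ∀ i j, h i j = h j i)
    (hinv1 : h * hinv = 1) (hinv2 : hinv * h = 1)
    (φ : Matrix (Fin n) (Fin n) ℝ) (hφ : ∀ i j, φ i j = - φ j i)
    (A : Fin n → Fin n → Fin n → Fin n → ℝ)
    (hA : ∀ i j k l, A i j k l =
      2 * φ i j * h k l + φ i k * h j l - φ j k * h i l
        - φ i l * h j k + φ j l * h i k)
    (Ric : Fin n → Fin n → ℝ)
    (hRic : ∀ j k, Ric j k = ∑ i, ∑ l, hinv i l * A i j k l) :
    (∀ i j k l, A i j k l = - A j i k l) ∧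
    (∀ i j k l, A i j k l + A j k i l + A k i j l = 0) ∧
    (∀ i j k l, A i j k l + A i j l k =
      (2 / (n : ℝ)) * (Ric j i - Ric i j) * h k l) :=
  sigma4_minus_sigma5_is_weyl_general h hinv hsymm hinv1 hinv2 φ hφ A hA Ric hRic
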